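/- Every periodic cube tiling of ℝ^d (d ≥ 1) is 2^{d−1}-discrete: for each coordinate i ∈ {1,...,d}, the set of residues {t_i mod 1 : t ∈ T} has at most 2^{d−1} elements. -/

import Mathlib

/-- The half-open unit cube `[x_1, x_1+1) × ⋯ × [x_d, x_d+1)` with corner `x`. -/
def cube (d : ℕ) (x : Fin d → ℝ) : Set (Fin d → ℝ) :=
  {y | ∀ i, x i ≤ y i ∧ y i < x i + 1}

/-- `T` is a cube tiling of `ℝ^d`: the cubes with corners in `T` are pairwise
disjoint and their union is all of `ℝ^d`. -/
def IsTiling (d : ℕ) (T : Set (Fin d → ℝ)) : Prop :=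
  (T.Pairwise fun t t' => Disjoint (cube d t) (cube d t')) ∧
  (⋃ t ∈ T, cube d t) = Set.univ

/-- The `i`-th standard basis vector of `ℝ^d`. -/
def stdBasis (d : ℕ) (i : Fin d) : Fin d → ℝ := fun j => if j = i then 1 else 0

/-- Two cubes (given by their corners `x`, `y`) faceshare if `y = x ± e_i`
for some standard basis vector `e_i`. -/
def Faceshare (d : ℕ) (x y : Fin d → ℝ) : Prop :=
  ∃ i : Fin d, y = x + stdBasis d i ∨ y = x - stdBasis d i

/-- A tiling is faceshare-free if no two distinct cubes of it faceshare. -/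
def FaceshareFree (d : ℕ) (T : Set (Fin d → ℝ)) : Prop :=
  ∀ t ∈ T, ∀ t' ∈ T, t ≠ t' → ¬ Faceshare d t t'

/-- A tiling `T` is periodic if `t + 2z ∈ T` for every `t ∈ T` and `z ∈ ℤ^d`. -/
def PeriodicTiling (d : ℕ) (T : Set (Fin d → ℝ)) : Prop :=
  ∀ t ∈ T, ∀ z : Fin d → ℤ, (fun j => t j + 2 * (z j : ℝ)) ∈ T

/-- A tiling is `s`-discrete if for each coordinate `i`, the values `t i` modulo 1
over `t ∈ T` take at most `s` distinct values. -/
def SDiscrete (d s : ℕ) (T : Set (Fin d → ℝ)) : Prop :=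
  ∀ i : Fin d, ∃ S : Finset ℝ, S.card ≤ s ∧ ∀ t ∈ T, Int.fract (t i) ∈ S

/-!
Each unit cube `C(t)` contains exactly one integer point, namely `⌈t⌉`. If two tiles `t`, `t'`
have `⌈t⌉ ≡ ⌈t'⌉ (mod 2)`, a period `2z` moves `C(t)` onto a cube containing `⌈t'⌉`, so
`t' = t + 2z` and the two tiles have the same residues mod 1. The tile directly above `t` in
direction `i` has the same residue `t_i mod 1` and the opposite parity of `⌈t_i⌉`, so every residue
is attained by a tile with `⌈t_i⌉` even, and there it is determined by the parities of the
remaining `d - 1` coordinates of `⌈t⌉`.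
-/

lemma Finset.exists_card_le_of_factors {α β γ : Type*} [Fintype γ] {A : Set α} (f : α → β)
    (p : α → γ) (h : ∀ a ∈ A, ∀ b ∈ A, p a = p b → f a = f b) :
    ∃ S : Finset β, S.card ≤ Fintype.card γ ∧ ∀ a ∈ A, f a ∈ S := by
  classical
  rcases A.eq_empty_or_nonempty with rfl | ⟨a₀, -⟩
  · exact ⟨∅, by simp, by simp⟩
  let g : γ → β := fun c => if hc : ∃ a ∈ A, p a = c then f hc.choose else f a₀
  refine ⟨Finset.univ.image g, Finset.card_image_le, fun a ha => Finset.mem_image.mpr ?_⟩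
  have hc : ∃ b ∈ A, p b = p a := ⟨a, ha, rfl⟩
  refine ⟨p a, Finset.mem_univ _, ?_⟩
  simp only [g, dif_pos hc]
  exact h _ hc.choose_spec.1 _ ha hc.choose_spec.2

section Tiling

variable {d : ℕ} {T : Set (Fin d → ℝ)}

lemma ceil_mem_cube (x : Fin d → ℝ) : (fun j => (⌈x j⌉ : ℝ)) ∈ cube d x :=
  fun _ => ⟨Int.le_ceil _, Int.ceil_lt_add_one _⟩

namespace IsTiling

lemma exists_mem_cube (hT : IsTiling d T) (x : Fin d → ℝ) : ∃ t ∈ T, x ∈ cube d t := by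
  have hx : x ∈ ⋃ t ∈ T, cube d t := hT.2 ▸ Set.mem_univ x
  simpa using hx

lemma eq_of_mem_cube (hT : IsTiling d T) {t t' x : Fin d → ℝ} (ht : t ∈ T) (ht' : t' ∈ T)
    (hx : x ∈ cube d t) (hx' : x ∈ cube d t') : t = t' := by
  by_contra hne
  exact Set.disjoint_left.mp (hT.1 ht ht' hne) hx hx'

/-- The tile containing `t + e_i` sits exactly on top of `t`: otherwise it would overlap `C(t)`. -/
lemma exists_mem_apply_eq_add_one (hT : IsTiling d T) {t : Fin d → ℝ} (ht : t ∈ T) (i : Fin d) :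
    ∃ t' ∈ T, t' i = t i + 1 := by
  obtain ⟨t', ht', hy⟩ := hT.exists_mem_cube (Function.update t i (t i + 1))
  refine ⟨t', ht', le_antisymm (by simpa using (hy i).1) (not_lt.mp fun hlt => ?_)⟩
  have hgt : t i < t' i := by linarith [(hy i).2, Function.update_self i (t i + 1) t]
  have hq : Function.update t i (t' i) ∈ cube d t := by
    intro j
    rcases eq_or_ne j i with rfl | hj
    · simpa using ⟨hgt.le, hlt⟩
    · simp [Function.update_of_ne hj]
  have hq' : Function.update t i (t' i) ∈ cube d t' := by
    intro j
    rcases eq_or_ne j i with rfl | hj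
    · simp
    · simpa [Function.update_of_ne hj] using hy j
  exact hgt.ne (congrFun (hT.eq_of_mem_cube ht ht' hq hq') i)

lemma exists_mem_fract_eq_ceil_even (hT : IsTiling d T) {t : Fin d → ℝ} (ht : t ∈ T)
    (i : Fin d) : ∃ s ∈ T, Int.fract (s i) = Int.fract (t i) ∧ (⌈s i⌉ : ZMod 2) = 0 := by
  by_cases heven : (⌈t i⌉ : ZMod 2) = 0
  · exact ⟨t, ht, rfl, heven⟩
  obtain ⟨t', ht', hti⟩ := hT.exists_mem_apply_eq_add_one ht i
  refine ⟨t', ht', by rw [hti, Int.fract_add_one], ?_⟩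
  rw [hti, Int.ceil_add_one, Int.cast_add, Int.cast_one]
  generalize (⌈t i⌉ : ZMod 2) = a at heven ⊢
  revert a
  decide

lemma exists_eq_add_two_mul_of_ceil_cast_eq (hT : IsTiling d T) (hP : PeriodicTiling d T)
    {t t' : Fin d → ℝ} (ht : t ∈ T) (ht' : t' ∈ T)
    (h : ∀ j, (⌈t j⌉ : ZMod 2) = ⌈t' j⌉) : ∃ z : Fin d → ℤ, t' = fun j => t j + 2 * (z j : ℝ) := by
  choose z hz using fun j => (ZMod.intCast_eq_intCast_iff_dvd_sub _ _ 2).mp (h j)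
  refine ⟨z, hT.eq_of_mem_cube ht' (hP t ht z) (ceil_mem_cube t') fun j => ?_⟩
  have hj : (⌈t' j⌉ : ℝ) = ⌈t j⌉ + 2 * (z j : ℝ) := by
    have hzj := hz j
    push_cast at hzj
    exact_mod_cast (by omega : ⌈t' j⌉ = ⌈t j⌉ + 2 * z j)
  rw [hj]
  constructor <;> linarith [Int.le_ceil (t j), Int.ceil_lt_add_one (t j)]

lemma fract_eq_of_ceil_cast_eq (hT : IsTiling d T) (hP : PeriodicTiling d T)
    {t t' : Fin d → ℝ} (ht : t ∈ T) (ht' : t' ∈ T)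
    (h : ∀ j, (⌈t j⌉ : ZMod 2) = ⌈t' j⌉) (i : Fin d) : Int.fract (t' i) = Int.fract (t i) := by
  obtain ⟨z, rfl⟩ := hT.exists_eq_add_two_mul_of_ceil_cast_eq hP ht ht' h
  exact_mod_cast Int.fract_add_intCast (t i) (2 * z i)

end IsTiling

end Tiling

theorem periodic_tiling_discrete_general (d : ℕ) (T : Set (Fin d → ℝ))
    (hT : IsTiling d T) (hP : PeriodicTiling d T) :
    SDiscrete d (2 ^ (d - 1)) T := by
  intro i
  obtain ⟨S, hcard, hS⟩ := Finset.exists_card_le_of_factors (A := {t ∈ T | (⌈t i⌉ : ZMod 2) = 0})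
    (fun t => Int.fract (t i)) (fun t (j : {j // j ≠ i}) => (⌈t j⌉ : ZMod 2))
    (by
      rintro t ⟨ht, hti⟩ t' ⟨ht', ht'i⟩ hpar
      refine (hT.fract_eq_of_ceil_cast_eq hP ht ht' (fun j => ?_) i).symm
      rcases eq_or_ne j i with rfl | hj
      · rw [hti, ht'i]
      · exact congrFun hpar ⟨j, hj⟩)
  refine ⟨S, hcard.trans_eq (by simp), fun t ht => ?_⟩
  obtain ⟨s, hs, hfract, heven⟩ := hT.exists_mem_fract_eq_ceil_even ht i
  exact hfract ▸ hS s ⟨hs, heven⟩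

/-- Every periodic cube tiling of `ℝ^d` (`d ≥ 1`) is `2^(d-1)`-discrete. -/
theorem periodic_tiling_discrete (d : ℕ) (hd : 1 ≤ d) (T : Set (Fin d → ℝ))
    (hT : IsTiling d T) (hP : PeriodicTiling d T) :
    SDiscrete d (2 ^ (d - 1)) T :=
  periodic_tiling_discrete_general d T hT hP
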